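/- The set of cells {(i, 2i−1) : 1 ≤ i ≤ k} ∪ {(k+i, 2k+2i−1) : 1 ≤ i ≤ k} ∪ {(2k+i, 2k+2i) : 1 ≤ i ≤ k} ∪ {(3k+i, 2i) : 1 ≤ i ≤ k} forms a transversal of the 4k × 4k Latin square L given by L(i,j) = ((j−i) mod 2k)+1 for i,j ≤ 2k, ((i−j) mod 2k)+1 for i,j > 2k, ((j−i) mod 2k)+1+2k for i ≤ 2k < j, and ((i−j) mod 2k)+1+2k for j ≤ 2k < i. -/

import Mathlib

/-!
In row `i` the transversal uses the odd columns `1, 3, …, 2k-1` and `2k+1, …, 4k-1` on the first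
two blocks of `k` rows and the even columns `2k+2, …, 4k` and `2, …, 2k` on the last two. Reducing
the circulant entries in closed form, the four row blocks receive the symbols `1..k`, `3k+1..4k`,
`k+1..2k` and `2k+1..3k` respectively, each in a strictly monotone way, so the symbols are
pairwise distinct.
-/

/-- The `2m × 2m` block-circulant square (here used with `m = 2k`, giving order `4k`). -/
def chLatin (m : ℕ) : ℕ → ℕ → ℕ := fun i j =>
  if i ≤ m then (m + j - i) % m + 1 + (if j ≤ m then 0 else m)
  else (m + i - j) % m + 1 + (if j ≤ m then m else 0)

/-- The column of the transversal cell in row `i` of the `4k × 4k` square: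
rows `1..k` use columns `2i-1`, rows `k+1..2k` use `2k+2(i-k)-1`,
rows `2k+1..3k` use `2k+2(i-2k)`, and rows `3k+1..4k` use `2(i-3k)`. -/
def trCol (k : ℕ) : ℕ → ℕ := fun i =>
  if i ≤ k then 2 * i - 1
  else if i ≤ 2 * k then 2 * k + 2 * (i - k) - 1
  else if i ≤ 3 * k then 2 * k + 2 * (i - 2 * k)
  else 2 * (i - 3 * k)

lemma trCol_mem_Icc {k i : ℕ} (hi : i ∈ Finset.Icc 1 (4 * k)) :
    trCol k i ∈ Finset.Icc 1 (4 * k) := by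
  simp only [Finset.mem_Icc] at hi ⊢
  unfold trCol
  split_ifs <;> omega

lemma trCol_injOn (k : ℕ) : Set.InjOn (trCol k) (Finset.Icc 1 (4 * k)) := by
  intro i hi i' hi'
  simp only [Finset.coe_Icc, Set.mem_Icc] at hi hi'
  unfold trCol
  split_ifs <;> omega

lemma chLatin_trCol {k i : ℕ} (hi : i ∈ Finset.Icc 1 (4 * k)) :
    chLatin (2 * k) i (trCol k i) =
      if i ≤ k then i
      else if i ≤ 2 * k then i + 2 * k
      else if i ≤ 3 * k then 4 * k + 1 - i
      else 6 * k + 1 - i := by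
  rw [Finset.mem_Icc] at hi
  unfold chLatin trCol
  split_ifs <;> try omega
  · rw [show 2 * k + (2 * i - 1) - i = 2 * k + (i - 1) by omega, Nat.add_mod_left,
      Nat.mod_eq_of_lt (by omega)]
    omega
  · rw [show 2 * k + (2 * k + 2 * (i - k) - 1) - i = 2 * k + (i - 1) by omega, Nat.add_mod_left,
      Nat.mod_eq_of_lt (by omega)]
    omega
  · rw [show 2 * k + i - (2 * k + 2 * (i - 2 * k)) = 4 * k - i by omega,
      Nat.mod_eq_of_lt (by omega)]
    omega
  · rw [show 2 * k + i - 2 * (i - 3 * k) = (4 * k - i) + 2 * k * 2 by omega,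
      Nat.add_mul_mod_self_left, Nat.mod_eq_of_lt (by omega)]
    omega

lemma chLatin_trCol_injOn (k : ℕ) :
    Set.InjOn (fun i ↦ chLatin (2 * k) i (trCol k i)) (Finset.Icc 1 (4 * k)) := by
  intro i hi i' hi' h
  simp only [chLatin_trCol hi, chLatin_trCol hi'] at h
  simp only [Finset.coe_Icc, Set.mem_Icc] at hi hi'
  split_ifs at h <;> omega

theorem stmt3_general (k : ℕ) :
    (∀ i ∈ Finset.Icc 1 (4 * k), trCol k i ∈ Finset.Icc 1 (4 * k)) ∧
    (∀ i ∈ Finset.Icc 1 (4 * k), ∀ i' ∈ Finset.Icc 1 (4 * k),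
        trCol k i = trCol k i' → i = i') ∧
    (∀ i ∈ Finset.Icc 1 (4 * k), ∀ i' ∈ Finset.Icc 1 (4 * k),
        chLatin (2 * k) i (trCol k i) = chLatin (2 * k) i' (trCol k i') → i = i') :=
  ⟨fun _ hi ↦ trCol_mem_Icc hi, fun _ hi _ hi' h ↦ trCol_injOn k hi hi' h,
    fun _ hi _ hi' h ↦ chLatin_trCol_injOn k hi hi' h⟩

/-- The indicated set of `4k` cells forms a transversal of the `4k × 4k` Latin square
`chLatin (2k)`: one cell per row, pairwise distinct columns, pairwise distinct entries. -/
theorem stmt3 (k : ℕ) (hk : 0 < k) :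
    (∀ i ∈ Finset.Icc 1 (4 * k), trCol k i ∈ Finset.Icc 1 (4 * k)) ∧
    (∀ i ∈ Finset.Icc 1 (4 * k), ∀ i' ∈ Finset.Icc 1 (4 * k),
        trCol k i = trCol k i' → i = i') ∧
    (∀ i ∈ Finset.Icc 1 (4 * k), ∀ i' ∈ Finset.Icc 1 (4 * k),
        chLatin (2 * k) i (trCol k i) = chLatin (2 * k) i' (trCol k i') → i = i') :=
  stmt3_general k
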